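/- arXiv:2502.05510 — 5 statements merged into one kernel-verified Lean document; each statement's English description precedes it below -/
import Mathlib

section
/- Reachability certificate soundness: Let X, X_I, X_G ⊆ ℝⁿ with X_I ⊆ X and X_G ⊆ X, and let V : ℝⁿ → ℝ, δ > 0 with δ > -inf_{x∈X_I} V(x). Suppose (i) V(x) ≤ 0 for all x ∈ X_I, (ii) V(x) > -δ for all x ∈ X \ X_G, (iii) V(x) > 0 for all x ∉ X. Let x : ℕ → ℝⁿ be a trajectory with x(0) ∈ X_I, let T ∈ ℕ₊, define k_G = min{k ≤ T : V(x(k)) ≤ -δ} if such k exists, else k_G = T, and suppose V(x(k+1)) - V(x(k)) < -(1/T)(sup_{x∈X_I}V(x) + δ) for all k < k_G. Then there exists k ≤ T with x(k) ∈ X_G, and x(j) ∈ X for all j ≤ k. -/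
/-! Until the hitting time `k_G` every step lowers `V` by at least `(sup V(X_I) + δ) / T`, so `T`
steps would carry `V` from at most `sup V(X_I)` down to `-δ`: hence `V(x k_G) ≤ -δ` with
`k_G ≤ T`. Up to `k_G` the values stay below `V(x 0) ≤ 0`, which keeps the trajectory in `X` by
(iii), and a point of `X` with `V ≤ -δ` lies in `X_G` by (ii). -/

theorem le_sub_nsmul_of_forall_sub_le {α : Type*} [AddCommGroup α] [PartialOrder α]
    [IsOrderedAddMonoid α] {f : ℕ → α} {c : α} {m : ℕ}
    (h : ∀ k < m, f (k + 1) - f k ≤ -c) {j : ℕ} (hj : j ≤ m) : f j ≤ f 0 - j • c := by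
  induction j with
  | zero => simp
  | succ j ih =>
    calc f (j + 1) ≤ f j - c := by simpa [sub_eq_add_neg, add_comm] using h j hj
      _ ≤ f 0 - j • c - c := sub_le_sub_right (ih (Nat.le_of_succ_le hj)) c
      _ = f 0 - (j + 1) • c := by rw [succ_nsmul, sub_add_eq_sub_sub]

section Certificate

variable {E : Type*} {X XG : Set E} {V : E → ℝ} {y : E}

theorem mem_of_certificate_nonpos (hdom : ∀ y, y ∉ X → V y > 0) (hy : V y ≤ 0) : y ∈ X := by
  by_contra hyX
  exact (hdom y hyX).not_ge hy

theorem mem_goal_of_certificate_le_neg {δ : ℝ} (hδ0 : 0 < δ) (hout : ∀ y ∈ X \ XG, V y > -δ)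
    (hdom : ∀ y, y ∉ X → V y > 0) (hy : V y ≤ -δ) : y ∈ XG := by
  by_contra hyG
  have hyX : y ∈ X := mem_of_certificate_nonpos hdom (by linarith)
  exact (hout y ⟨hyX, hyG⟩).not_ge hy

end Certificate

theorem reach_certificate_sound_general {n : ℕ}
    (X XI XG : Set (Fin n → ℝ)) (V : (Fin n → ℝ) → ℝ) (δ : ℝ)
    (hbdd : BddAbove (V '' XI)) (hbddb : BddBelow (V '' XI))
    (hδ0 : 0 < δ) (hδ : δ > -sInf (V '' XI))
    (hinit : ∀ y ∈ XI, V y ≤ 0)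
    (hout : ∀ y ∈ X \ XG, V y > -δ)
    (hdom : ∀ y, y ∉ X → V y > 0)
    (x : ℕ → (Fin n → ℝ)) (hx0 : x 0 ∈ XI)
    (T : ℕ) (hT : 0 < T) (kG : ℕ)
    (hkG : (kG ≤ T ∧ V (x kG) ≤ -δ ∧ ∀ j < kG, ¬ V (x j) ≤ -δ) ∨
           (kG = T ∧ ∀ j ≤ T, ¬ V (x j) ≤ -δ))
    (hdec : ∀ k < kG,
      V (x (k + 1)) - V (x k) < -(1 / (T : ℝ)) * (sSup (V '' XI) + δ)) :
    ∃ k ≤ T, x k ∈ XG ∧ ∀ j ≤ k, x j ∈ X := by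
  set S := sSup (V '' XI)
  have hx0S : V (x 0) ≤ S := le_csSup hbdd ⟨x 0, hx0, rfl⟩
  have hSδ : 0 < S + δ := by linarith [csInf_le hbddb ⟨x 0, hx0, rfl⟩]
  set c := 1 / (T : ℝ) * (S + δ)
  have hc : 0 < c := mul_pos (by positivity) hSδ
  have hdesc : ∀ j ≤ kG, V (x j) ≤ V (x 0) - j • c := fun j hj =>
    le_sub_nsmul_of_forall_sub_le (f := fun k => V (x k))
      (fun k hk => (hdec k hk).le.trans_eq (neg_mul _ _)) hj
  have hreach : kG ≤ T ∧ V (x kG) ≤ -δ := by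
    rcases hkG with ⟨hle, hV, -⟩ | ⟨rfl, hall⟩
    · exact ⟨hle, hV⟩
    · refine absurd ?_ (hall kG le_rfl)
      calc V (x kG) ≤ V (x 0) - kG • c := hdesc kG le_rfl
        _ = V (x 0) - (S + δ) := by
          have : (kG : ℝ) ≠ 0 := by positivity
          simp only [c, nsmul_eq_mul, one_div, mul_inv_cancel_left₀ this]
        _ ≤ -δ := by linarith
  refine ⟨kG, hreach.1, mem_goal_of_certificate_le_neg hδ0 hout hdom hreach.2,
    fun j hj => mem_of_certificate_nonpos hdom ?_⟩
  calc V (x j) ≤ V (x 0) - j • c := hdesc j hj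
    _ ≤ V (x 0) := sub_le_self _ (nsmul_nonneg hc.le j)
    _ ≤ 0 := hinit _ hx0

theorem reach_certificate_sound {n : ℕ}
    (X XI XG : Set (Fin n → ℝ)) (V : (Fin n → ℝ) → ℝ) (δ : ℝ)
    (hIX : XI ⊆ X) (hGX : XG ⊆ X)
    (hIne : XI.Nonempty) (hbdd : BddAbove (V '' XI)) (hbddb : BddBelow (V '' XI))
    (hδ0 : 0 < δ) (hδ : δ > -sInf (V '' XI))
    (hinit : ∀ y ∈ XI, V y ≤ 0)
    (hout : ∀ y ∈ X \ XG, V y > -δ)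
    (hdom : ∀ y, y ∉ X → V y > 0)
    (x : ℕ → (Fin n → ℝ)) (hx0 : x 0 ∈ XI)
    (T : ℕ) (hT : 0 < T) (kG : ℕ)
    (hkG : (kG ≤ T ∧ V (x kG) ≤ -δ ∧ ∀ j < kG, ¬ V (x j) ≤ -δ) ∨
           (kG = T ∧ ∀ j ≤ T, ¬ V (x j) ≤ -δ))
    (hdec : ∀ k < kG,
      V (x (k + 1)) - V (x k) < -(1 / (T : ℝ)) * (sSup (V '' XI) + δ)) :
    ∃ k ≤ T, x k ∈ XG ∧ ∀ j ≤ k, x j ∈ X :=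
  reach_certificate_sound_general X XI XG V δ hbdd hbddb hδ0 hδ hinit hout hdom x hx0 T hT kG hkG
    hdec
end

section
/- Safety certificate soundness: Let X_I, X_U ⊆ ℝⁿ be disjoint, V : ℝⁿ → ℝ with V(x) ≤ 0 on X_I and V(x) > 0 on X_U. Let T ∈ ℕ₊ and x : ℕ → ℝⁿ a trajectory with x(0) ∈ X_I satisfying V(x(k+1)) - V(x(k)) < (1/T)(inf_{x∈X_U}V(x) - sup_{x∈X_I}V(x)) for all k < T. Then x(k) ∉ X_U for all 0 ≤ k ≤ T. -/
/-!
If the trajectory entered the unsafe set at some step `0 < k ≤ T`, then telescoping the increment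
bound gives `V (x k) < V (x 0) + k δ ≤ sup_{X_I} V + T δ = inf_{X_U} V`, where `δ ≥ 0`
because `V ≤ 0` on `X_I` and `V > 0` on `X_U`; this contradicts `x k ∈ X_U`. At `k = 0` the sign
conditions on `V` alone separate `X_I` from `X_U`.
-/

open Finset in
theorem sub_lt_nsmul_of_forall_succ_sub_lt {G : Type*} [AddCommGroup G] [PartialOrder G]
    [IsOrderedCancelAddMonoid G] {u : ℕ → G} {δ : G} {T : ℕ}
    (h : ∀ k < T, u (k + 1) - u k < δ) {k : ℕ} (hk : 0 < k) (hkT : k ≤ T) :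
    u k - u 0 < k • δ := by
  calc u k - u 0 = ∑ i ∈ range k, (u (i + 1) - u i) := (sum_range_sub u k).symm
    _ < ∑ _i ∈ range k, δ :=
      sum_lt_sum_of_nonempty (nonempty_range_iff.mpr hk.ne') fun i hi =>
        h i ((mem_range.mp hi).trans_le hkT)
    _ = k • δ := by rw [sum_const, card_range]

theorem sSup_image_le_sInf_image_of_nonpos_of_pos {α : Type*} {f : α → ℝ} {s t : Set α}
    (hs : ∀ y ∈ s, f y ≤ 0) (ht : ∀ y ∈ t, 0 < f y) : sSup (f '' s) ≤ sInf (f '' t) :=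
  (Real.sSup_nonpos (Set.forall_mem_image.mpr hs)).trans
    (Real.sInf_nonneg (Set.forall_mem_image.mpr fun y hy => (ht y hy).le))

theorem safety_certificate_sound_general {n : ℕ}
    (XI XU : Set (Fin n → ℝ)) (V : (Fin n → ℝ) → ℝ)
    (hbddI : BddAbove (V '' XI)) (hbddU : BddBelow (V '' XU))
    (hinit : ∀ y ∈ XI, V y ≤ 0)
    (hunsafe : ∀ y ∈ XU, V y > 0)
    (T : ℕ)
    (x : ℕ → (Fin n → ℝ)) (hx0 : x 0 ∈ XI)
    (hdec : ∀ k < T, V (x (k + 1)) - V (x k) <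
      (1 / (T : ℝ)) * (sInf (V '' XU) - sSup (V '' XI))) :
    ∀ k ≤ T, x k ∉ XU := by
  intro k hkT hxk
  rcases k.eq_zero_or_pos with rfl | hk
  · exact (hunsafe _ hxk).not_ge (hinit _ hx0)
  set δ := (1 / (T : ℝ)) * (sInf (V '' XU) - sSup (V '' XI))
  have hT : (T : ℝ) ≠ 0 := by exact_mod_cast (hk.trans_le hkT).ne'
  have hδ : 0 ≤ δ := mul_nonneg (by positivity)
    (sub_nonneg.mpr (sSup_image_le_sInf_image_of_nonpos_of_pos hinit hunsafe))
  have hstep : V (x k) - V (x 0) < k • δ :=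
    sub_lt_nsmul_of_forall_succ_sub_lt (u := fun i => V (x i)) hdec hk hkT
  rw [nsmul_eq_mul] at hstep
  have hkδ : (k : ℝ) * δ ≤ T * δ := mul_le_mul_of_nonneg_right (by exact_mod_cast hkT) hδ
  have hTδ : (T : ℝ) * δ = sInf (V '' XU) - sSup (V '' XI) := by
    simp only [δ]; field_simp
  refine lt_irrefl (sInf (V '' XU)) ?_
  calc sInf (V '' XU) ≤ V (x k) := csInf_le hbddU (Set.mem_image_of_mem V hxk)
    _ < V (x 0) + k * δ := by linarith
    _ ≤ sSup (V '' XI) + T * δ := add_le_add (le_csSup hbddI (Set.mem_image_of_mem V hx0)) hkδ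
    _ = sInf (V '' XU) := by rw [hTδ, add_sub_cancel]

theorem safety_certificate_sound {n : ℕ}
    (XI XU : Set (Fin n → ℝ)) (V : (Fin n → ℝ) → ℝ)
    (hdisj : XI ∩ XU = ∅)
    (hIne : XI.Nonempty) (hUne : XU.Nonempty)
    (hbddI : BddAbove (V '' XI)) (hbddU : BddBelow (V '' XU))
    (hinit : ∀ y ∈ XI, V y ≤ 0)
    (hunsafe : ∀ y ∈ XU, V y > 0)
    (T : ℕ) (hT : 0 < T)
    (x : ℕ → (Fin n → ℝ)) (hx0 : x 0 ∈ XI)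
    (hdec : ∀ k < T, V (x (k + 1)) - V (x k) <
      (1 / (T : ℝ)) * (sInf (V '' XU) - sSup (V '' XI))) :
    ∀ k ≤ T, x k ∉ XU :=
  safety_certificate_sound_general XI XU V hbddI hbddU hinit hunsafe T x hx0 hdec
end

section
/- Reach-while-avoid certificate soundness: under the combined conditions (V ≤ 0 on X_I, V > 0 on X_U and outside X, V > -δ on X \ X_G, δ > -inf_{X_I} V, (X_I ∪ X_G) ∩ X_U = ∅), and trajectory decrease conditions V(x(k+1))-V(x(k)) < -(1/T)(sup_{X_I}V + δ) for k < k_G and V(x(k+1))-V(x(k)) < (1/T)(inf_{X_U}V + δ) for k_G ≤ k < T, every trajectory starting in X_I reaches X_G within T steps and satisfies x(k) ∉ X_U for all 0 ≤ k ≤ T. -/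
theorem rwa_certificate_sound {n : ℕ}
    (X XI XU XG : Set (Fin n → ℝ)) (V : (Fin n → ℝ) → ℝ) (δ : ℝ)
    (hIX : XI ⊆ X) (hGX : XG ⊆ X) (hUX : XU ⊆ X)
    (hGc : IsCompact XG)
    (hdisj : (XI ∪ XG) ∩ XU = ∅)
    (hIne : XI.Nonempty) (hUne : XU.Nonempty)
    (hbddI : BddAbove (V '' XI)) (hbddIb : BddBelow (V '' XI))
    (hbddU : BddBelow (V '' XU))
    (hδ0 : 0 < δ) (hδ : δ > -sInf (V '' XI))
    (hinit : ∀ y ∈ XI, V y ≤ 0)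
    (hunsafe : ∀ y ∈ XU, V y > 0)
    (hdomout : ∀ y, y ∉ X → V y > 0)
    (hout : ∀ y ∈ X \ XG, V y > -δ)
    (T : ℕ) (hT : 0 < T)
    (x : ℕ → (Fin n → ℝ)) (hx0 : x 0 ∈ XI) (kG : ℕ)
    (hkG : (kG ≤ T ∧ V (x kG) ≤ -δ ∧ ∀ j < kG, ¬ V (x j) ≤ -δ) ∨
           (kG = T ∧ ∀ j ≤ T, ¬ V (x j) ≤ -δ))
    (hdec1 : ∀ k < kG,
      V (x (k + 1)) - V (x k) < -(1 / (T : ℝ)) * (sSup (V '' XI) + δ))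
    (hdec2 : ∀ k, kG ≤ k → k < T →
      V (x (k + 1)) - V (x k) < (1 / (T : ℝ)) * (sInf (V '' XU) + δ)) :
    (∃ k ≤ T, x k ∈ XG) ∧ ∀ k ≤ T, x k ∉ XU := by
  set S := sSup (V '' XI) with hSdef
  set I := sInf (V '' XI) with hIdef
  set U := sInf (V '' XU) with hUdef
  have hS0 : S ≤ 0 := csSup_le (hIne.image V) (by rintro _ ⟨y, hy, rfl⟩; exact hinit y hy)
  have hIS : I ≤ S := csInf_le_csSup (hIne.image V) hbddIb hbddI
  have hSδ : 0 < S + δ := by linarith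
  have hU0 : 0 ≤ U := le_csInf (hUne.image V)
    (by rintro _ ⟨y, hy, rfl⟩; exact (hunsafe y hy).le)
  have hUδ : 0 < U + δ := by linarith
  have hTpos : (0:ℝ) < T := by exact_mod_cast hT
  have hX0S : V (x 0) ≤ S := le_csSup hbddI ⟨x 0, hx0, rfl⟩
  have hstep1 : 0 < (1/(T:ℝ)) * (S+δ) := by positivity
  have hTel : ∀ m, m ≤ kG → V (x m) ≤ V (x 0) - m * ((1/(T:ℝ)) * (S+δ)) := by
    intro m
    induction m with
    | zero => intro _; simp
    | succ p ih =>
      intro hm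
      have hp : p < kG := lt_of_lt_of_le (Nat.lt_succ_self p) hm
      have h1 := hdec1 p hp
      have h2 := ih hp.le
      push_cast
      linarith
  rcases hkG with ⟨hkGT, hVkG, _⟩ | ⟨hkGT, hnone⟩
  · -- goal reached at kG
    have hGmem : x kG ∈ XG := by
      by_contra hnot
      by_cases hxX : x kG ∈ X
      · have := hout (x kG) ⟨hxX, hnot⟩; linarith
      · have := hdomout (x kG) hxX; linarith
    refine ⟨⟨kG, hkGT, hGmem⟩, ?_⟩
    intro k hk hkU
    by_cases hcase : k ≤ kG
    · have hVk : V (x k) ≤ 0 := by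
        have := hTel k hcase
        have hk0 : (0:ℝ) ≤ (k:ℝ) * ((1/(T:ℝ)) * (S+δ)) := by positivity
        have hV0 : V (x 0) ≤ 0 := hinit _ hx0
        linarith
      exact absurd (hunsafe _ hkU) (by linarith)
    · push_neg at hcase
      have hTel2 : ∀ d, kG + d ≤ T → V (x (kG + d)) ≤ -δ + d * ((1/(T:ℝ)) * (U+δ)) := by
        intro d
        induction d with
        | zero => intro _; simpa using hVkG
        | succ p ih =>
          intro hpd
          have h1 := hdec2 (kG + p) (Nat.le_add_right _ _) (by omega)
          have h2 := ih (by omega)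
          have he : kG + (p+1) = (kG + p) + 1 := by ring
          rw [he]
          push_cast
          linarith
      obtain ⟨d, rfl⟩ : ∃ d, k = kG + d + 1 := ⟨k - kG - 1, by omega⟩
      have h1 := hdec2 (kG + d) (Nat.le_add_right _ _) (by omega)
      have h2 := hTel2 d (by omega)
      have hdT : (d:ℝ) + 1 ≤ (T:ℝ) := by exact_mod_cast (by omega : d + 1 ≤ T)
      have key : (T:ℝ) * ((1/(T:ℝ))*(U+δ)) = U+δ := by field_simp
      have hb : ((d:ℝ)+1) * ((1/(T:ℝ))*(U+δ)) ≤ U + δ := by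
        calc ((d:ℝ)+1) * ((1/(T:ℝ))*(U+δ)) ≤ (T:ℝ) * ((1/(T:ℝ))*(U+δ)) :=
              mul_le_mul_of_nonneg_right hdT (by positivity)
          _ = U + δ := key
      have hge : U ≤ V (x (kG + d + 1)) := csInf_le hbddU ⟨_, hkU, rfl⟩
      nlinarith
  · exfalso
    have h2 := hTel T (by omega)
    have key : (T:ℝ) * ((1/(T:ℝ))*(S+δ)) = S+δ := by field_simp
    exact hnone T le_rfl (by linarith)
end

section
/- Suppose a trajectory satisfies V(x(k_G)) ≤ -δ and V(x(k+1)) - V(x(k)) < (1/T)(m + δ) for all k_G ≤ k < T, where m = inf_{x∈X_U}V(x). Then V(x(k)) < m for all k_G ≤ k ≤ T, and hence x(k) ∉ X_U for those k if V > 0 on X_U implies only points with V ≥ m lie in X_U. -/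
theorem rwa_tail_safety {n : ℕ}
    (XU : Set (Fin n → ℝ)) (V : (Fin n → ℝ) → ℝ)
    (T kG : ℕ) (hT : 0 < T) (hkGT : kG ≤ T)
    (δ m : ℝ) (hmδ : 0 < m + δ)
    (hm : ∀ y ∈ XU, m ≤ V y)
    (x : ℕ → (Fin n → ℝ))
    (hstart : V (x kG) ≤ -δ)
    (hdec : ∀ k, kG ≤ k → k < T →
      V (x (k + 1)) - V (x k) < (1 / (T : ℝ)) * (m + δ)) :
    ∀ k, kG ≤ k → k ≤ T → V (x k) < m ∧ x k ∉ XU := by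
  set c : ℝ := (1 / (T : ℝ)) * (m + δ) with hc
  have hT' : (0 : ℝ) < (T : ℝ) := by exact_mod_cast hT
  have hTc : (T : ℝ) * c = m + δ := by
    rw [hc]; field_simp [hT'.ne']
  have key : ∀ j : ℕ, kG + j ≤ T →
      V (x (kG + j)) ≤ -δ + j * c ∧ (0 < j → V (x (kG + j)) < -δ + j * c) := by
    intro j
    induction j with
    | zero => intro _; exact ⟨by simpa using hstart, by omega⟩
    | succ j ih =>
      intro hle
      have hle' : kG + j ≤ T := by omega
      have hlt : kG + j < T := by omega
      have h1 := (ih hle').1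
      have h2 := hdec (kG + j) (by omega) hlt
      rw [show kG + (j + 1) = kG + j + 1 from rfl]
      constructor
      · push_cast
        nlinarith
      · intro _
        push_cast
        nlinarith
  intro k hk1 hk2
  have hVm : V (x k) < m := by
    obtain ⟨j, rfl⟩ : ∃ j, k = kG + j := ⟨k - kG, by omega⟩
    rcases Nat.eq_zero_or_pos j with rfl | hj
    · simp only [Nat.add_zero]
      linarith
    · have h := (key j hk2).2 hj
      have hjT : (j : ℝ) ≤ (T : ℝ) := by exact_mod_cast (by omega : j ≤ T)
      have hcpos : 0 < c := by positivity
      nlinarith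
  exact ⟨hVm, fun hmem => absurd (hm _ hmem) (not_le.mpr hVm)⟩
end

section
/- Compression set of the union after discarding: if Algorithm B iteratively calls a sub-algorithm A on a shrinking sample set D, each call returning a compression set Cᵢ ⊆ D which is then removed from D and added to R, then upon termination R = ⋃ᵢ Cᵢ, the Cᵢ are pairwise disjoint, and rerunning B on R (instead of the full D) yields the same final output; in particular R is a compression set for B. -/
/-!
Each call of `A` peels its compression set `Cᵢ` off the current sample `Dᵢ`, so the `Dᵢ`
decrease, every `Cᵢ` is disjoint from all later `Dⱼ` (hence from all later `Cⱼ`), and the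
collected set is `R = D₀ \ Dₙ`. Rerunning on `R` keeps the invariant `D'ᵢ = Dᵢ \ Dₙ`:
this set lies between `Cᵢ` and `Dᵢ`, so by the compression property `A` returns the same
parameter and the same compression set on it as on `Dᵢ`.
-/

open Finset

theorem antitoneOn_nat_Iic_of_succ_le {α : Type*} [Preorder α] {f : ℕ → α} {n : ℕ}
    (hf : ∀ i < n, f (i + 1) ≤ f i) : AntitoneOn f (Set.Iic n) := by
  intro i _ j hjn hij
  induction j, hij using Nat.le_induction with
  | base => exact le_rfl
  | succ k _ ih => exact (hf k hjn).trans (ih (Nat.le_of_succ_le hjn))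

def IsCompressionStable {Θ Ξ : Type*} (A : Θ → Finset Ξ → Θ × Finset Ξ) : Prop :=
  ∀ (t : Θ) (d d' : Finset Ξ), (A t d).2 ⊆ d' → d' ⊆ d → A t d' = A t d

section Peeling

variable {Ξ : Type*} [DecidableEq Ξ] {C D R : ℕ → Finset Ξ} {n : ℕ}

theorem peel_antitoneOn (hD : ∀ i < n, D (i + 1) = D i \ C i) : AntitoneOn D (Set.Iic n) :=
  antitoneOn_nat_Iic_of_succ_le fun i hi => (hD i hi).symm ▸ sdiff_subset

theorem disjoint_peel_of_lt (hD : ∀ i < n, D (i + 1) = D i \ C i) {i j : ℕ} (hij : i < j)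
    (hjn : j ≤ n) : Disjoint (C i) (D j) := by
  have hsub : D j ⊆ D i \ C i :=
    hD i (hij.trans_le hjn) ▸ peel_antitoneOn hD (Set.mem_Iic.2 (hij.trans_le hjn)) hjn hij
  exact disjoint_sdiff.mono_right hsub

theorem pairwise_disjoint_peel (hD : ∀ i < n, D (i + 1) = D i \ C i)
    (hC : ∀ i < n, C i ⊆ D i) : ∀ i < n, ∀ j < n, i ≠ j → Disjoint (C i) (C j) := by
  intro i hi j hj hij
  rcases hij.lt_or_gt with hlt | hgt
  · exact (disjoint_peel_of_lt hD hlt hj.le).mono_right (hC j hj)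
  · exact ((disjoint_peel_of_lt hD hgt hi.le).mono_right (hC i hi)).symm

theorem eq_biUnion_range_of_union_succ (hR0 : R 0 = ∅) (hR : ∀ i < n, R (i + 1) = R i ∪ C i) :
    R n = (range n).biUnion C := by
  induction n with
  | zero => simpa using hR0
  | succ k ih =>
    rw [hR k k.lt_succ_self, ih fun i hi => hR i (hi.trans k.lt_succ_self), range_add_one,
      biUnion_insert, union_comm]

theorem collected_eq_sdiff (hR0 : R 0 = ∅) (hR : ∀ i < n, R (i + 1) = R i ∪ C i)
    (hD : ∀ i < n, D (i + 1) = D i \ C i) (hC : ∀ i < n, C i ⊆ D i) : R n = D 0 \ D n := by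
  induction n with
  | zero => simpa using hR0
  | succ k ih =>
    have hk := k.lt_succ_self
    have hCD0 : C k ⊆ D 0 :=
      (hC k hk).trans (peel_antitoneOn hD (Set.mem_Iic.2 (Nat.zero_le _))
        (Set.mem_Iic.2 hk.le) (Nat.zero_le k))
    rw [hR k hk, hD k hk, sdiff_sdiff_eq_sdiff_union hCD0,
      ih (fun i hi => hR i (hi.trans hk)) (fun i hi => hD i (hi.trans hk))
        (fun i hi => hC i (hi.trans hk))]

theorem rerun_on_remainder {Θ : Type*} {A : Θ → Finset Ξ → Θ × Finset Ξ}
    (hA : IsCompressionStable A) {θ θ' : ℕ → Θ} {D' : ℕ → Finset Ξ}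
    (hstep : ∀ i < n, A (θ i) (D i) = (θ (i + 1), C i))
    (hD : ∀ i < n, D (i + 1) = D i \ C i) (hC : ∀ i < n, C i ⊆ D i)
    (hstep' : ∀ i < n, θ' (i + 1) = (A (θ' i) (D' i)).1 ∧
      D' (i + 1) = D' i \ (A (θ' i) (D' i)).2)
    (hθ0 : θ' 0 = θ 0) (hD0 : D' 0 = D 0 \ D n) :
    ∀ i ≤ n, θ' i = θ i ∧ D' i = D i \ D n := by
  intro i hin
  induction i with
  | zero => exact ⟨hθ0, hD0⟩
  | succ k ih =>
    have hk : k < n := hin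
    obtain ⟨hθk, hDk⟩ := ih hk.le
    have hCk : C k ⊆ D' k :=
      hDk ▸ subset_sdiff.2 ⟨hC k hk, disjoint_peel_of_lt hD hk le_rfl⟩
    have hsame : A (θ' k) (D' k) = (θ (k + 1), C k) := by
      rw [hθk, ← hstep k hk]
      exact hA _ _ _ (by rw [hstep k hk]; exact hCk) (hDk ▸ sdiff_subset)
    obtain ⟨hθ', hD'⟩ := hstep' k hk
    rw [hsame] at hθ' hD'
    exact ⟨hθ', by rw [hD', hDk, hD k hk, sdiff_right_comm]⟩

end Peeling

theorem discarding_compression {Ξ Θ : Type*} [DecidableEq Ξ]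
    (A : Θ → Finset Ξ → Θ × Finset Ξ) (n : ℕ)
    (θ : ℕ → Θ) (D R : ℕ → Finset Ξ) (C : ℕ → Finset Ξ)
    (hR0 : R 0 = ∅)
    (hstep : ∀ i < n,
      (θ (i + 1), C i) = A (θ i) (D i) ∧
      D (i + 1) = D i \ C i ∧
      R (i + 1) = R i ∪ C i ∧
      C i ⊆ D i ∧ (C i).Nonempty)
    -- A returns the same output on any subset of the input that contains
    -- the returned compression set (compression property of the sub-algorithm)
    (hA : ∀ (t : Θ) (d d' : Finset Ξ), (A t d).2 ⊆ d' → d' ⊆ d → A t d' = A t d) :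
    R n = (Finset.range n).biUnion C ∧
    (∀ i < n, ∀ j < n, i ≠ j → Disjoint (C i) (C j)) ∧
    (∀ (θ' : ℕ → Θ) (D' : ℕ → Finset Ξ),
      θ' 0 = θ 0 → D' 0 = R n →
      (∀ i < n, θ' (i + 1) = (A (θ' i) (D' i)).1 ∧
        D' (i + 1) = D' i \ (A (θ' i) (D' i)).2) →
      θ' n = θ n) := by
  have hθC : ∀ i < n, A (θ i) (D i) = (θ (i + 1), C i) := fun i hi => (hstep i hi).1.symm
  have hD : ∀ i < n, D (i + 1) = D i \ C i := fun i hi => (hstep i hi).2.1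
  have hR : ∀ i < n, R (i + 1) = R i ∪ C i := fun i hi => (hstep i hi).2.2.1
  have hC : ∀ i < n, C i ⊆ D i := fun i hi => (hstep i hi).2.2.2.1
  refine ⟨eq_biUnion_range_of_union_succ hR0 hR, pairwise_disjoint_peel hD hC, ?_⟩
  intro θ' D' hθ0 hD0 hstep'
  have hD0' : D' 0 = D 0 \ D n := hD0.trans (collected_eq_sdiff hR0 hR hD hC)
  exact (rerun_on_remainder hA hθC hD hC hstep' hθ0 hD0' n le_rfl).1
end
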